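/- Let B be the ℚ-subalgebra of A_n^+ generated by the elements a_{i,j} with 2 ≤ i < j ≤ n. Then A_n^+ is free as a right B-module with basis 1, a_{1,2}, a_{1,3}, …, a_{1,n}; that is, as a ℚ-vector space A_n^+ is the internal direct sum A_n^+ = B ⊕ a_{1,2}·B ⊕ a_{1,3}·B ⊕ ⋯ ⊕ a_{1,n}·B. -/

import Mathlib

/-- Index set for the generators `a_{i,j}`, `i < j`, of `H^*(PΣ_n⁺; ℚ)`. -/
abbrev McIdx (n : ℕ) := {p : Fin n × Fin n // p.1 < p.2}

/-- The exterior algebra over `ℚ` on degree-one generators `a_{i,j}`, `i < j`. -/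
abbrev McExt (n : ℕ) := ExteriorAlgebra ℚ (McIdx n →₀ ℚ)

/-- The degree-one generator `a_{i,j}` (`i < j`) of the exterior algebra. -/
noncomputable def mcGen (n : ℕ) (p : McIdx n) : McExt n :=
  ExteriorAlgebra.ι ℚ (Finsupp.single p (1 : ℚ))

/-- The relations defining `H^*(PΣ_n⁺; ℚ)` as a quotient of the exterior algebra:
`a_{i,j} a_{i,k} - a_{i,j} a_{j,k} = 0` for `i < j < k`. -/
inductive McRel (n : ℕ) : McExt n → McExt n → Prop
  | tri {i j k : Fin n} (hij : i < j) (hjk : j < k) :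
      McRel n (mcGen n ⟨(i, j), hij⟩ * mcGen n ⟨(i, k), hij.trans hjk⟩
        - mcGen n ⟨(i, j), hij⟩ * mcGen n ⟨(j, k), hjk⟩) 0

/-- `A_n⁺ = E⁺/I⁺`, the rational cohomology ring of `PΣ_n⁺`. -/
abbrev McA (n : ℕ) := RingQuot (McRel n)

/-- The image `a_{i,j}` (`i < j`) in `A_n⁺` of the exterior generator. -/
noncomputable def mcA (n : ℕ) (p : McIdx n) : McA n :=
  RingQuot.mkAlgHom ℚ (McRel n) (mcGen n p)

/-- The subalgebra `B` of `A_n⁺` generated by the `a_{i,j}` with `2 ≤ i < j ≤ n`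
(0-based: `1 ≤ i < j`). -/
noncomputable def mcB (n : ℕ) : Subalgebra ℚ (McA n) :=
  Algebra.adjoin ℚ {x : McA n | ∃ p : McIdx n, 0 < p.1.1.1 ∧ x = mcA n p}

/-- The family of `ℚ`-subspaces `B, a_{1,2}·B, a_{1,3}·B, …, a_{1,n}·B` of `A_n⁺`
(0-based: `a_{0,j}` with `j = 1, …, n-1`), indexed by `Option (Fin (n-1))`. -/
noncomputable def mcBFam (n : ℕ) (hn : 2 ≤ n) :
    Option (Fin (n - 1)) → Submodule ℚ (McA n)
  | none => Subalgebra.toSubmodule (mcB n)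
  | some j =>
      Submodule.map
        (LinearMap.mulLeft ℚ
          (mcA n ⟨(⟨0, by omega⟩, ⟨j.1 + 1, by have := j.isLt; omega⟩),
            by simp only [Fin.mk_lt_mk]; omega⟩))
        (Subalgebra.toSubmodule (mcB n))

/-- Total version of the generators, zero outside range. -/
noncomputable def aE (n : ℕ) (i j : ℕ) : McA n :=
  if h : i < j ∧ j < n then
    mcA n ⟨(⟨i, h.1.trans h.2⟩, ⟨j, h.2⟩), Fin.mk_lt_mk.mpr h.1⟩ else 0

abbrev MM (n : ℕ) := ℕ →₀ McA n

noncomputable def Tgen (n : ℕ) (i j : ℕ) : Module.End ℚ (MM n) :=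
  Finsupp.lsum ℚ fun (k : ℕ) =>
    if k = 0 then
      (if i = 0 then Finsupp.lsingle j
       else (Finsupp.lsingle 0) ∘ₗ LinearMap.mulLeft ℚ (aE n i j))
    else
      (if i = 0 then
        (if j < k then (Finsupp.lsingle j) ∘ₗ LinearMap.mulLeft ℚ (aE n j k)
         else if j = k then 0
         else (Finsupp.lsingle k) ∘ₗ LinearMap.mulLeft ℚ (-(aE n k j)))
       else (Finsupp.lsingle k) ∘ₗ LinearMap.mulLeft ℚ (-(aE n i j)))


variable {n : ℕ}

theorem T_z (j : ℕ) (b : McA n) :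
    Tgen n 0 j (Finsupp.single 0 b) = Finsupp.single j b := by
  simp [Tgen]

theorem T_p {i : ℕ} (hi : i ≠ 0) (j : ℕ) (b : McA n) :
    Tgen n i j (Finsupp.single 0 b) = Finsupp.single 0 (aE n i j * b) := by
  simp [Tgen, hi]

theorem T_p' {i : ℕ} (hi : i ≠ 0) (j : ℕ) {k : ℕ} (hk : k ≠ 0) (b : McA n) :
    Tgen n i j (Finsupp.single k b) = Finsupp.single k (-(aE n i j * b)) := by
  simp [Tgen, hi, hk]

theorem T_z_lt {j k : ℕ} (hk : k ≠ 0) (h : j < k) (b : McA n) :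
    Tgen n 0 j (Finsupp.single k b) = Finsupp.single j (aE n j k * b) := by
  simp [Tgen, hk, h]

theorem T_z_eq {j k : ℕ} (hk : k ≠ 0) (h : j = k) (b : McA n) :
    Tgen n 0 j (Finsupp.single k b) = 0 := by
  simp [Tgen, hk, h]

theorem T_z_gt {j k : ℕ} (hk : k ≠ 0) (h : k < j) (b : McA n) :
    Tgen n 0 j (Finsupp.single k b) = Finsupp.single k (-(aE n k j * b)) := by
  simp [Tgen, hk, Nat.lt_asymm h, (Nat.ne_of_lt h).symm]

theorem mcA_sq (p : McIdx n) : mcA n p * mcA n p = 0 := by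
  rw [mcA, ← map_mul, mcGen, ExteriorAlgebra.ι_sq_zero, map_zero]

theorem mcA_swap (p q : McIdx n) : mcA n p * mcA n q + mcA n q * mcA n p = 0 := by
  have h := congrArg (RingQuot.mkAlgHom ℚ (McRel n))
    (ExteriorAlgebra.ι_add_mul_swap (R := ℚ) (Finsupp.single p 1) (Finsupp.single q 1))
  simp only [map_add, map_mul, map_zero] at h
  simpa only [mcA, mcGen] using h

theorem mcA_rel {i j k : Fin n} (hij : i < j) (hjk : j < k) :
    mcA n ⟨(i, j), hij⟩ * mcA n ⟨(i, k), hij.trans hjk⟩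
      = mcA n ⟨(i, j), hij⟩ * mcA n ⟨(j, k), hjk⟩ := by
  have := RingQuot.mkAlgHom_rel ℚ (McRel.tri hij hjk)
  simp only [map_sub, map_mul, map_zero, sub_eq_zero, mcA] at this ⊢
  exact this

theorem aE_sq (i j : ℕ) : aE n i j * aE n i j = 0 := by
  unfold aE; split
  · exact mcA_sq _
  · simp

theorem aE_swap (i j k l : ℕ) : aE n i j * aE n k l + aE n k l * aE n i j = 0 := by
  unfold aE; split <;> split <;> simp [mcA_swap]

theorem aE_rel {i j k : ℕ} (hij : i < j) (hjk : j < k) :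
    aE n i j * aE n i k = aE n i j * aE n j k := by
  unfold aE
  by_cases hk : k < n
  · have hjn : j < n := hjk.trans hk
    rw [dif_pos ⟨hij, hjn⟩, dif_pos ⟨hij.trans hjk, hk⟩, dif_pos ⟨hjk, hk⟩]
    exact mcA_rel (Fin.mk_lt_mk.mpr hij) (Fin.mk_lt_mk.mpr hjk)
  · rw [dif_neg (by omega : ¬(i < k ∧ k < n)), dif_neg (by omega : ¬(j < k ∧ k < n))]

/-- generic cross-term cancellation -/
theorem cross {x y : McA n} (h : x * y + y * x = 0) (b : McA n) :
    x * (y * b) + y * (x * b) = 0 := by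
  rw [← mul_assoc, ← mul_assoc, ← add_mul, h, zero_mul]

theorem aE_neg_of_swap (i j k l : ℕ) : aE n i j * aE n k l = -(aE n k l * aE n i j) :=
  eq_neg_of_add_eq_zero_left (aE_swap i j k l)

theorem T_anti_pp {i j i' j' : ℕ} (hi : i ≠ 0) (hi' : i' ≠ 0) :
    Tgen n i j * Tgen n i' j' + Tgen n i' j' * Tgen n i j = 0 := by
  refine Finsupp.lhom_ext fun k b => ?_
  simp only [LinearMap.add_apply, Module.End.mul_apply, LinearMap.zero_apply]
  by_cases hk : k = 0
  · subst hk
    simp only [T_p hi, T_p hi']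
    rw [← Finsupp.single_add, cross (aE_swap _ _ _ _) b, Finsupp.single_zero]
  · simp only [T_p' hi _ hk, T_p' hi' _ hk, mul_neg, neg_neg]
    rw [← Finsupp.single_add, cross (aE_swap _ _ _ _) b, Finsupp.single_zero]

theorem T_anti_zp {j i' j' : ℕ} (hj : j ≠ 0) (hi' : i' ≠ 0) :
    Tgen n 0 j * Tgen n i' j' + Tgen n i' j' * Tgen n 0 j = 0 := by
  refine Finsupp.lhom_ext fun k b => ?_
  simp only [LinearMap.add_apply, Module.End.mul_apply, LinearMap.zero_apply]
  by_cases hk : k = 0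
  · subst hk
    simp only [T_p hi', T_z, T_p' hi' _ hj]
    rw [← Finsupp.single_add, add_neg_cancel, Finsupp.single_zero]
  · rcases Nat.lt_trichotomy j k with h | h | h
    · simp only [T_p' hi' _ hk, T_z_lt hk h, T_p' hi' _ hj, mul_neg]
      rw [← Finsupp.single_add, ← neg_add, cross (aE_swap _ _ _ _) b, neg_zero,
        Finsupp.single_zero]
    · simp only [T_p' hi' _ hk, T_z_eq hk h, map_zero, add_zero, zero_add]
    · simp only [T_p' hi' _ hk, T_z_gt hk h, mul_neg, neg_neg]
      rw [← Finsupp.single_add, cross (aE_swap _ _ _ _) b, Finsupp.single_zero]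

theorem T_anti_zz {j j' : ℕ} (hj : j ≠ 0) (hjj' : j ≤ j') :
    Tgen n 0 j * Tgen n 0 j' + Tgen n 0 j' * Tgen n 0 j = 0 := by
  have hj' : j' ≠ 0 := by omega
  refine Finsupp.lhom_ext fun k b => ?_
  simp only [LinearMap.add_apply, Module.End.mul_apply, LinearMap.zero_apply]
  rcases eq_or_lt_of_le hjj' with rfl | hlt
  · -- j = j' : T² = 0
    by_cases hk : k = 0
    · subst hk
      rw [T_z, T_z_eq hj rfl, add_zero]
    · rcases Nat.lt_trichotomy j k with h | h | h
      · rw [T_z_lt hk h, T_z_eq hj rfl, add_zero]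
      · rw [T_z_eq hk h, map_zero, add_zero]
      · rw [T_z_gt hk h, T_z_gt hk h, mul_neg, neg_neg, ← mul_assoc, aE_sq, zero_mul,
          Finsupp.single_zero, add_zero]
  · -- j < j'
    by_cases hk : k = 0
    · subst hk
      rw [T_z, T_z, T_z_lt hj' hlt, T_z_gt hj hlt]
      rw [← Finsupp.single_add, add_neg_cancel, Finsupp.single_zero]
    · rcases Nat.lt_trichotomy j' k with h' | h' | h'
      · -- j < j' < k
        have h : j < k := hlt.trans h'
        rw [T_z_lt hk h', T_z_lt hk h, T_z_lt hj' hlt, T_z_gt hj hlt]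
        rw [← Finsupp.single_add, ← mul_assoc, ← mul_assoc,
          aE_rel hlt h', add_neg_cancel, Finsupp.single_zero]
      · -- j < j' = k
        subst h'
        rw [T_z_eq hk rfl, map_zero, zero_add, T_z_lt hk hlt, T_z_gt hj hlt,
          ← mul_assoc, aE_sq, zero_mul, neg_zero, Finsupp.single_zero]
      · -- k < j'
        rcases Nat.lt_trichotomy j k with h | h | h
        · -- j < k < j'
          rw [T_z_gt hk h', T_z_lt hk h, T_z_lt hk h, T_z_gt hj (h.trans h')]
          rw [← Finsupp.single_add, mul_neg, ← mul_assoc, ← mul_assoc,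
            aE_neg_of_swap j j' j k, aE_rel h h', neg_mul, neg_neg,
            neg_add_cancel, Finsupp.single_zero]
        · -- j = k < j'
          subst h
          rw [T_z_gt hk h', T_z_eq hk rfl, T_z_eq hk rfl, map_zero, add_zero]
        · -- k < j ≤ j'
          rw [T_z_gt hk h', T_z_gt hk h, T_z_gt hk h, T_z_gt hk h', mul_neg, neg_neg,
            mul_neg, neg_neg, ← Finsupp.single_add, cross (aE_swap _ _ _ _) b,
            Finsupp.single_zero]

theorem T_anti {i j i' j' : ℕ} (hij : i < j) (hij' : i' < j') :
    Tgen n i j * Tgen n i' j' + Tgen n i' j' * Tgen n i j = 0 := by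
  by_cases hi : i = 0 <;> by_cases hi' : i' = 0
  · subst hi hi'
    rcases le_total j j' with h | h
    · exact T_anti_zz (by omega) h
    · rw [add_comm]; exact T_anti_zz (by omega) h
  · subst hi; exact T_anti_zp (by omega) hi'
  · subst hi'; rw [add_comm]; exact T_anti_zp (by omega) hi
  · exact T_anti_pp hi hi'

theorem T_rel {i j k : ℕ} (hij : i < j) (hjk : j < k) :
    Tgen n i j * Tgen n i k = Tgen n i j * Tgen n j k := by
  have hj : j ≠ 0 := by omega
  have hk : k ≠ 0 := by omega
  refine Finsupp.lhom_ext fun m b => ?_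
  simp only [Module.End.mul_apply]
  by_cases hi : i = 0
  · subst hi
    by_cases hm : m = 0
    · subst hm
      rw [T_z, T_p hj, T_z, T_z_lt hk hjk]
    · rcases Nat.lt_trichotomy k m with h | h | h
      · -- k < m
        have hjm : j < m := hjk.trans h
        rw [T_z_lt hm h, T_p' hj _ hm, T_z_lt hk hjk, T_z_lt hm hjm,
          mul_neg, ← mul_assoc, ← mul_assoc, aE_neg_of_swap j m j k, neg_mul,
          neg_neg, aE_rel hjk h]
      · -- k = m
        subst h
        rw [T_z_eq hm rfl, map_zero, T_p' hj _ hm, T_z_lt hm hjk,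
          mul_neg, ← mul_assoc, aE_sq, zero_mul, neg_zero, Finsupp.single_zero]
      · -- m < k
        rcases Nat.lt_trichotomy j m with h2 | h2 | h2
        · rw [T_z_gt hm h, T_p' hj _ hm, T_z_lt hm h2, T_z_lt hm h2, mul_neg, mul_neg,
            ← mul_assoc, ← mul_assoc, aE_rel h2 h]
        · subst h2
          rw [T_z_gt hm h, T_p' hj _ hm, T_z_eq hm rfl]
        · rw [T_z_gt hm h, T_p' hj _ hm, T_z_gt hm h2, T_z_gt hm h2, mul_neg, mul_neg,
            neg_neg, neg_neg, ← mul_assoc, ← mul_assoc, aE_rel h2 hjk]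
  · by_cases hm : m = 0
    · subst hm
      rw [T_p hi, T_p hi, T_p hj, T_p hi, ← mul_assoc, ← mul_assoc, aE_rel hij hjk]
    · rw [T_p' hi _ hm, T_p' hi _ hm, T_p' hj _ hm, T_p' hi _ hm, mul_neg, mul_neg,
        neg_neg, neg_neg, ← mul_assoc, ← mul_assoc, aE_rel hij hjk]

theorem T_sq {i j : ℕ} (hij : i < j) : Tgen n i j * Tgen n i j = 0 := by
  have h := T_anti (n := n) hij hij
  rw [← two_smul ℚ, smul_eq_zero] at h
  exact h.resolve_left (by norm_num)

noncomputable def fT (n : ℕ) : (McIdx n →₀ ℚ) →ₗ[ℚ] Module.End ℚ (MM n) :=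
  Finsupp.linearCombination ℚ (fun p : McIdx n => Tgen n p.1.1.1 p.1.2.1)

theorem fT_single (p : McIdx n) (c : ℚ) :
    fT n (Finsupp.single p c) = c • Tgen n p.1.1.1 p.1.2.1 := by
  simp [fT]

theorem fT_anti (p : McIdx n) (v : McIdx n →₀ ℚ) :
    Tgen n p.1.1.1 p.1.2.1 * fT n v + fT n v * Tgen n p.1.1.1 p.1.2.1 = 0 := by
  induction v using Finsupp.induction with
  | zero => simp
  | single_add q c w _ _ ih =>
    rw [map_add, fT_single, mul_add, add_mul, mul_smul_comm, smul_mul_assoc]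
    have h1 := T_anti (n := n) (Fin.lt_def.mp p.2) (Fin.lt_def.mp q.2)
    calc _ = c • (Tgen n p.1.1.1 p.1.2.1 * Tgen n q.1.1.1 q.1.2.1
              + Tgen n q.1.1.1 q.1.2.1 * Tgen n p.1.1.1 p.1.2.1)
            + (Tgen n p.1.1.1 p.1.2.1 * fT n w + fT n w * Tgen n p.1.1.1 p.1.2.1) := by
            rw [smul_add]; abel
      _ = 0 := by rw [h1, ih, smul_zero, add_zero]

theorem fT_sq (v : McIdx n →₀ ℚ) : fT n v * fT n v = 0 := by
  induction v using Finsupp.induction with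
  | zero => simp
  | single_add q c w _ _ ih =>
    rw [map_add, fT_single]
    rw [mul_add, add_mul, add_mul, smul_mul_assoc, mul_smul_comm, mul_smul_comm,
      smul_mul_assoc, T_sq (Fin.lt_def.mp q.2), smul_zero, smul_zero, zero_add, ih, add_zero]
    rw [← smul_add, add_comm, fT_anti q w, smul_zero]

noncomputable def mcE (n : ℕ) : McExt n →ₐ[ℚ] Module.End ℚ (MM n) :=
  ExteriorAlgebra.lift ℚ ⟨fT n, fT_sq⟩

theorem mcE_gen (p : McIdx n) : mcE n (mcGen n p) = Tgen n p.1.1.1 p.1.2.1 := by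
  rw [mcGen, mcE, ExteriorAlgebra.lift_ι_apply, fT_single, one_smul]

noncomputable def mcRho (n : ℕ) : McA n →ₐ[ℚ] Module.End ℚ (MM n) :=
  RingQuot.liftAlgHom ℚ ⟨mcE n, by
    rintro x y ⟨hij, hjk⟩
    rw [map_sub, map_mul, map_mul, map_zero, mcE_gen, mcE_gen, mcE_gen, sub_eq_zero]
    exact T_rel (Fin.lt_def.mp hij) (Fin.lt_def.mp hjk)⟩

theorem rho_mcA (p : McIdx n) : mcRho n (mcA n p) = Tgen n p.1.1.1 p.1.2.1 := by
  rw [mcA, mcRho, RingQuot.liftAlgHom_mkAlgHom_apply, mcE_gen]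

theorem aE_of (p : McIdx n) : aE n p.1.1.1 p.1.2.1 = mcA n p := by
  rw [aE, dif_pos ⟨Fin.lt_def.mp p.2, p.1.2.isLt⟩]

theorem mcA_mem_B (p : McIdx n) (hp : 0 < p.1.1.1) : mcA n p ∈ mcB n :=
  Algebra.subset_adjoin ⟨p, hp, rfl⟩

theorem aE_mem_B {i : ℕ} (j : ℕ) (hi : i ≠ 0) : aE n i j ∈ mcB n := by
  rw [aE]; split
  · next h => exact mcA_mem_B _ (Nat.pos_of_ne_zero hi)
  · exact zero_mem _

theorem rho_B {b : McA n} (hb : b ∈ mcB n) :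
    ∀ c : McA n, mcRho n b (Finsupp.single 0 c) = Finsupp.single 0 (b * c) := by
  induction hb using Algebra.adjoin_induction with
  | mem x hx =>
    intro c
    obtain ⟨p, hp, rfl⟩ := hx
    rw [rho_mcA, T_p (by omega), aE_of]
  | algebraMap r =>
    intro c
    rw [AlgHom.commutes, Module.algebraMap_end_apply, Finsupp.smul_single,
      Algebra.smul_def]
  | add x y hx hy ihx ihy =>
    intro c
    rw [map_add (mcRho n), LinearMap.add_apply, ihx, ihy, ← Finsupp.single_add, add_mul]
  | mul x y hx hy ihx ihy =>
    intro c
    rw [map_mul (mcRho n), Module.End.mul_apply, ihy, ihx, mul_assoc]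

theorem mem_fam_some {hn : 2 ≤ n} (k : Fin (n - 1)) {x : McA n} :
    x ∈ mcBFam n hn (some k) ↔ ∃ b ∈ mcB n, aE n 0 (k.1 + 1) * b = x := by
  have haE : mcA n ⟨(⟨0, by omega⟩, ⟨k.1 + 1, by have := k.isLt; omega⟩),
      by simp only [Fin.mk_lt_mk]; omega⟩ = aE n 0 (k.1 + 1) := (aE_of _).symm
  show x ∈ Submodule.map _ _ ↔ _
  rw [Submodule.mem_map]
  constructor
  · rintro ⟨b, hb, rfl⟩
    exact ⟨b, hb, by rw [LinearMap.mulLeft_apply, haE]⟩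
  · rintro ⟨b, hb, rfl⟩
    exact ⟨b, hb, by rw [LinearMap.mulLeft_apply, haE]⟩

theorem mem_fam_none {hn : 2 ≤ n} {x : McA n} :
    x ∈ mcBFam n hn none ↔ x ∈ mcB n := Iff.rfl

theorem stab (hn : 2 ≤ n) (p : McIdx n) {x : McA n} (hx : x ∈ ⨆ o, mcBFam n hn o) :
    mcA n p * x ∈ ⨆ o, mcBFam n hn o := by
  have hjn : p.1.2.1 < n := p.1.2.isLt
  have hij : p.1.1.1 < p.1.2.1 := Fin.lt_def.mp p.2
  rw [← aE_of p]
  set i := p.1.1.1 with hi_def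
  set j := p.1.2.1 with hj_def
  clear_value i j
  refine Submodule.iSup_induction (motive := fun y => aE n i j * y ∈ ⨆ o, mcBFam n hn o)
    _ hx (fun o y hy => ?_)
    (by show aE n i j * 0 ∈ _; rw [mul_zero]; exact zero_mem _)
    (fun a b ha hb => by
      show aE n i j * (a + b) ∈ _
      rw [mul_add]; exact add_mem ha hb)
  cases o with
  | none =>
    by_cases hi : i = 0
    · subst hi
      refine Submodule.mem_iSup_of_mem (some ⟨j - 1, by omega⟩) ?_
      rw [mem_fam_some]
      refine ⟨y, hy, ?_⟩
      have hj1 : j - 1 + 1 = j := by omega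
      rw [hj1]
    · exact Submodule.mem_iSup_of_mem none
        (mem_fam_none.mpr (mul_mem (aE_mem_B j hi) (mem_fam_none.mp hy)))
  | some k =>
    rw [mem_fam_some] at hy
    obtain ⟨b, hb, rfl⟩ := hy
    by_cases hi : i = 0
    · subst hi
      have hj0 : 0 < j := by omega
      rcases Nat.lt_trichotomy j (k.1 + 1) with h | h | h
      · rw [← mul_assoc, aE_rel hj0 h, mul_assoc]
        refine Submodule.mem_iSup_of_mem (some ⟨j - 1, by omega⟩) ?_
        rw [mem_fam_some]
        refine ⟨aE n j (k.1 + 1) * b, mul_mem (aE_mem_B _ (by omega)) hb, ?_⟩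
        have hj1 : j - 1 + 1 = j := by omega
        rw [hj1]
      · subst h
        rw [← mul_assoc, aE_sq, zero_mul]
        exact zero_mem _
      · rw [← mul_assoc, aE_neg_of_swap 0 j 0 (k.1 + 1), aE_rel (by omega) h,
          neg_mul, mul_assoc]
        refine neg_mem (Submodule.mem_iSup_of_mem (some k) ?_)
        rw [mem_fam_some]
        exact ⟨aE n (k.1 + 1) j * b, mul_mem (aE_mem_B _ (by omega)) hb, rfl⟩
    · rw [← mul_assoc, aE_neg_of_swap i j 0 (k.1 + 1), neg_mul, mul_assoc]
      refine neg_mem (Submodule.mem_iSup_of_mem (some k) ?_)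
      rw [mem_fam_some]
      exact ⟨aE n i j * b, mul_mem (aE_mem_B _ hi) hb, rfl⟩

theorem sup_top (hn : 2 ≤ n) : (⨆ o, mcBFam n hn o) = ⊤ := by
  rw [eq_top_iff]
  rintro x -
  obtain ⟨y, rfl⟩ := RingQuot.mkAlgHom_surjective ℚ (McRel n) x
  have h1 : (1 : McA n) ∈ ⨆ o, mcBFam n hn o :=
    Submodule.mem_iSup_of_mem none (one_mem (mcB n))
  suffices h : ∀ s ∈ ⨆ o, mcBFam n hn o,
      RingQuot.mkAlgHom ℚ (McRel n) y * s ∈ ⨆ o, mcBFam n hn o by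
    simpa using h 1 h1
  induction y using ExteriorAlgebra.induction with
  | algebraMap r =>
    intro s hs
    rw [AlgHom.commutes, ← Algebra.smul_def]
    exact Submodule.smul_mem _ r hs
  | ι v =>
    intro s hs
    induction v using Finsupp.induction with
    | zero => rw [map_zero, map_zero, zero_mul]; exact zero_mem _
    | single_add p c w _ _ ih =>
      rw [map_add, map_add, add_mul]
      refine add_mem ?_ ih
      have hval : RingQuot.mkAlgHom ℚ (McRel n) (ExteriorAlgebra.ι ℚ (Finsupp.single p c))
          = c • mcA n p := by
        rw [← Finsupp.smul_single_one, map_smul, map_smul, mcA, mcGen]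
      rw [hval, smul_mul_assoc]
      exact Submodule.smul_mem _ c (stab hn p hs)
  | mul a b iha ihb =>
    intro s hs
    rw [map_mul, mul_assoc]
    exact iha _ (ihb _ hs)
  | add a b iha ihb =>
    intro s hs
    rw [map_add, add_mul]
    exact add_mem (iha s hs) (ihb s hs)

noncomputable def psi (n : ℕ) : McA n →ₗ[ℚ] MM n :=
  (LinearMap.applyₗ (Finsupp.single 0 1)).comp (mcRho n).toLinearMap

theorem psi_apply (x : McA n) : psi n x = mcRho n x (Finsupp.single 0 1) := rfl

theorem rho_aE {i j : ℕ} (hij : i < j) (hjn : j < n) :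
    mcRho n (aE n i j) = Tgen n i j := by
  rw [aE, dif_pos ⟨hij, hjn⟩, rho_mcA]

theorem psi_none {x : McA n} (hx : x ∈ mcB n) : psi n x = Finsupp.single 0 x := by
  rw [psi_apply, rho_B hx 1, mul_one]

theorem psi_some {hnn : 2 ≤ n} (k : Fin (n - 1)) {b : McA n} (hb : b ∈ mcB n) :
    psi n (aE n 0 (k.1 + 1) * b) = Finsupp.single (k.1 + 1) b := by
  rw [psi_apply, map_mul (mcRho n), Module.End.mul_apply, ← psi_apply, psi_none hb,
    rho_aE (Nat.succ_pos _) (by have := k.isLt; omega), T_z]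

/-- key of each component -/
def okey {n : ℕ} : Option (Fin (n - 1)) → ℕ
  | none => 0
  | some k => k.1 + 1

theorem indep (hn : 2 ≤ n) : iSupIndep (mcBFam n hn) := by
  rw [iSupIndep_def]
  intro o
  rw [Submodule.disjoint_def]
  intro x hxo hxsup
  have hB : (psi n x) (okey o) = 0 := by
    refine Submodule.iSup_induction
      (motive := fun y => (psi n y) (okey o) = 0) _ hxsup (fun o' z hz => ?_)
      (by show (psi n 0) (okey o) = 0; rw [map_zero]; rfl)
      (fun a b ha hb => by
        show (psi n (a + b)) (okey o) = 0
        rw [map_add, Finsupp.add_apply, ha, hb, add_zero])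
    rcases eq_or_ne o' o with rfl | hne
    · rw [iSup_neg (by simp)] at hz
      simp only [Submodule.mem_bot] at hz
      rw [hz, map_zero]; rfl
    · rw [iSup_pos hne] at hz
      cases o' with
      | none =>
        rw [psi_none (mem_fam_none.mp hz)]
        apply Finsupp.single_eq_of_ne
        cases o with
        | none => exact absurd rfl hne
        | some k2 => simp [okey]
      | some k =>
        obtain ⟨b, hb, rfl⟩ := (mem_fam_some k).mp hz
        rw [psi_some (hnn := hn) k hb]
        apply Finsupp.single_eq_of_ne
        cases o with
        | none => simp [okey]
        | some k2 =>
          simp only [okey, ne_eq, Nat.add_right_cancel_iff]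
          intro h
          exact hne (by rw [Option.some_inj]; exact Fin.ext h.symm)
  cases o with
  | none =>
    rw [psi_none (mem_fam_none.mp hxo)] at hB
    simpa [okey] using hB
  | some k =>
    obtain ⟨b, hb, rfl⟩ := (mem_fam_some k).mp hxo
    rw [psi_some (hnn := hn) k hb] at hB
    simp only [okey, Finsupp.single_eq_same] at hB
    rw [hB, mul_zero]


/-- `A_n⁺` is free as a right module over the subalgebra `B` generated by the
`a_{i,j}` with `2 ≤ i < j ≤ n`, with basis `1, a_{1,2}, a_{1,3}, …, a_{1,n}`: as a
`ℚ`-vector space, `A_n⁺` is the internal direct sum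
`B ⊕ a_{1,2}·B ⊕ a_{1,3}·B ⊕ ⋯ ⊕ a_{1,n}·B`. -/
theorem mcA_free_over_subalgebra (n : ℕ) (hn : 2 ≤ n) :
    DirectSum.IsInternal (mcBFam n hn) := by
  rw [DirectSum.isInternal_submodule_iff_iSupIndep_and_iSup_eq_top]
  exact ⟨indep hn, sup_top hn⟩
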